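/- arXiv:1510.05326 — 7 statements merged into one kernel-verified Lean document; each statement's English description precedes it below -/
import Mathlib

section
/- In a Heyting algebra, every filter is the intersection of the set of prime filters containing it. -/
variable {H : Type*} [HeytingAlgebra H]

def IsFilter (F : Set H) : Prop :=
  F.Nonempty ∧ (∀ a b : H, a ∈ F → a ≤ b → b ∈ F) ∧ (∀ a b : H, a ∈ F → b ∈ F → a ⊓ b ∈ F)

def IsProperFilter (F : Set H) : Prop := IsFilter F ∧ F ≠ Set.univ

def IsPrimeFilter (F : Set H) : Prop :=
  IsProperFilter F ∧ ∀ a b : H, a ⊔ b ∈ F → a ∈ F ∨ b ∈ F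

def IsUltrafilter (U : Set H) : Prop :=
  IsProperFilter U ∧ ∀ F : Set H, IsProperFilter F → U ⊆ F → F = U

/-- The filter generated by a filter `P` and an element `a`. -/
lemma gen_filter {P : Set H} (hP : IsFilter P) (a : H) :
    IsFilter {y : H | ∃ p ∈ P, p ⊓ a ≤ y} := by
  obtain ⟨⟨p0, hp0⟩, hup, hmeet⟩ := hP
  refine ⟨⟨p0 ⊓ a, ⟨p0, hp0, le_rfl⟩⟩, ?_, ?_⟩
  · rintro y z ⟨p, hp, hle⟩ hyz
    exact ⟨p, hp, hle.trans hyz⟩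
  · rintro y z ⟨p, hp, hpy⟩ ⟨q, hq, hqz⟩
    refine ⟨p ⊓ q, hmeet _ _ hp hq, le_inf ?_ ?_⟩
    · exact le_trans (inf_le_inf_right a inf_le_left) hpy
    · exact le_trans (inf_le_inf_right a inf_le_right) hqz

theorem filter_eq_sInter_primes (F : Set H) (hF : IsFilter F) :
    F = ⋂₀ {P : Set H | IsPrimeFilter P ∧ F ⊆ P} := by
  apply Set.Subset.antisymm
  · intro y hy P hP
    exact hP.2 hy
  · intro x hx
    by_contra hxF
    obtain ⟨P, _, hPmem, hPmax⟩ :=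
      zorn_subset_nonempty {G : Set H | IsFilter G ∧ x ∉ G ∧ F ⊆ G}
        (fun c hcS hc hcne => by
          refine ⟨⋃₀ c, ⟨⟨?_, ?_, ?_⟩, ?_, ?_⟩, fun s hs => Set.subset_sUnion_of_mem hs⟩
          · obtain ⟨G, hG⟩ := hcne
            obtain ⟨g, hg⟩ := (hcS hG).1.1
            exact ⟨g, G, hG, hg⟩
          · rintro a b ⟨G, hG, haG⟩ hab
            exact ⟨G, hG, (hcS hG).1.2.1 a b haG hab⟩
          · rintro a b ⟨G1, hG1, ha⟩ ⟨G2, hG2, hb⟩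
            rcases hc.total hG1 hG2 with h | h
            · exact ⟨G2, hG2, (hcS hG2).1.2.2 a b (h ha) hb⟩
            · exact ⟨G1, hG1, (hcS hG1).1.2.2 a b ha (h hb)⟩
          · rintro ⟨G, hG, hxG⟩
            exact (hcS hG).2.1 hxG
          · obtain ⟨G, hG⟩ := hcne
            exact (hcS hG).2.2.trans (Set.subset_sUnion_of_mem hG))
        F ⟨hF, hxF, subset_rfl⟩
    obtain ⟨hPfil, hxP, hFP⟩ := hPmem
    have hmax : ∀ {G : Set H}, G ∈ {G : Set H | IsFilter G ∧ x ∉ G ∧ F ⊆ G} → P ⊆ G → G ⊆ P :=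
      fun hG hPG => hPmax hG hPG
    -- P is a prime filter containing F, so x ∈ P : contradiction
    have hprime : IsPrimeFilter P := by
      refine ⟨⟨hPfil, fun h => hxP (h ▸ Set.mem_univ x)⟩, ?_⟩
      intro a b hab
      by_contra hor
      push_neg at hor
      obtain ⟨haP, hbP⟩ := hor
      -- the filter generated by P and a contains x
      have key : ∀ c : H, c ∉ P → ∃ p ∈ P, p ⊓ c ≤ x := by
        intro c hcP
        by_contra hcon
        push_neg at hcon
        have hGfil := gen_filter hPfil c
        have hGmem : {y : H | ∃ p ∈ P, p ⊓ c ≤ y} ∈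
            {G : Set H | IsFilter G ∧ x ∉ G ∧ F ⊆ G} := by
          refine ⟨hGfil, ?_, ?_⟩
          · rintro ⟨p, hp, hle⟩
            exact hcon p hp hle
          · intro f hf
            exact ⟨f, hFP hf, inf_le_left⟩
        have hsub : P ⊆ {y : H | ∃ p ∈ P, p ⊓ c ≤ y} :=
          fun p hp => ⟨p, hp, inf_le_left⟩
        have := hmax hGmem hsub
        exact hcP (this ⟨⊤, hPfil.2.1 _ _ hab le_top, by simp⟩)
      obtain ⟨p, hp, hpa⟩ := key a haP
      obtain ⟨q, hq, hqb⟩ := key b hbP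
      have hpq : p ⊓ q ⊓ (a ⊔ b) ∈ P := hPfil.2.2 _ _ (hPfil.2.2 _ _ hp hq) hab
      have : p ⊓ q ⊓ (a ⊔ b) ≤ x := by
        rw [inf_sup_left]
        apply sup_le
        · exact le_trans (inf_le_inf_right a (inf_le_left)) hpa
        · exact le_trans (inf_le_inf_right b (inf_le_right)) hqb
      exact hxP (hPfil.2.1 _ _ hpq this)
    exact hxP (hx P ⟨hprime, hFP⟩)
end

section
/- Let H be a Heyting algebra, P a prime filter of H, and m₁, m₂ ∈ H. If for every prime filter P' with P ⊆ P', m₁ ∈ P' implies m₂ ∈ P', then the Heyting implication m₁ ⇨ m₂ belongs to P. -/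
variable {H : Type*} [HeytingAlgebra H]

/-- The filter generated by a filter `F` together with one element `a`. -/
def adjoin (F : Set H) (a : H) : Set H := {x | ∃ p ∈ F, p ⊓ a ≤ x}

lemma adjoin_isFilter {F : Set H} (hF : IsFilter F) (a : H) : IsFilter (adjoin F a) := by
  obtain ⟨⟨p0, hp0⟩, hup, hmeet⟩ := hF
  refine ⟨⟨a, p0, hp0, inf_le_right⟩, ?_, ?_⟩
  · rintro x y ⟨p, hp, hpx⟩ hxy
    exact ⟨p, hp, hpx.trans hxy⟩
  · rintro x y ⟨p, hp, hpx⟩ ⟨q, hq, hqy⟩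
    refine ⟨p ⊓ q, hmeet _ _ hp hq, le_inf ?_ ?_⟩
    · exact le_trans (inf_le_inf_right a (inf_le_left)) hpx
    · exact le_trans (inf_le_inf_right a (inf_le_right)) hqy

lemma subset_adjoin {F : Set H} (_hF : IsFilter F) (a : H) : F ⊆ adjoin F a :=
  fun x hx => ⟨x, hx, inf_le_left⟩

lemma mem_adjoin {F : Set H} (hF : IsFilter F) (a : H) : a ∈ adjoin F a :=
  hF.1.elim fun p hp => ⟨p, hp, inf_le_right⟩

/-- Extend a filter avoiding `m` to a prime filter avoiding `m`. -/
lemma exists_prime_extension {F : Set H} (hF : IsFilter F) {m : H} (hm : m ∉ F) :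
    ∃ M : Set H, IsPrimeFilter M ∧ F ⊆ M ∧ m ∉ M := by
  set S : Set (Set H) := {G | IsFilter G ∧ m ∉ G} with hS
  have hub : ∀ c ⊆ S, IsChain (· ⊆ ·) c → c.Nonempty → ∃ ub ∈ S, ∀ s ∈ c, s ⊆ ub := by
    intro c hcS hchain hcne
    obtain ⟨G0, hG0⟩ := hcne
    refine ⟨⋃₀ c, ⟨⟨?_, ?_, ?_⟩, ?_⟩, fun s hs => Set.subset_sUnion_of_mem hs⟩
    · obtain ⟨p, hp⟩ := (hcS hG0).1.1
      exact ⟨p, G0, hG0, hp⟩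
    · rintro x y ⟨G, hG, hx⟩ hxy
      exact ⟨G, hG, (hcS hG).1.2.1 _ _ hx hxy⟩
    · rintro x y ⟨G, hG, hx⟩ ⟨G', hG', hy⟩
      rcases hchain.total hG hG' with hsub | hsub
      · exact ⟨G', hG', (hcS hG').1.2.2 _ _ (hsub hx) hy⟩
      · exact ⟨G, hG, (hcS hG).1.2.2 _ _ hx (hsub hy)⟩
    · rintro ⟨G, hG, hmG⟩
      exact (hcS hG).2 hmG
  obtain ⟨M, hFM, hMS, hmax⟩ := zorn_subset_nonempty S hub F ⟨hF, hm⟩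
  · obtain ⟨hMfil, hmM⟩ := hMS
    have hproper : M ≠ Set.univ := fun he => hmM (he ▸ Set.mem_univ m)
    refine ⟨M, ⟨⟨hMfil, hproper⟩, ?_⟩, hFM, hmM⟩
    intro a b hab
    by_contra hcon
    push_neg at hcon
    obtain ⟨ha, hb⟩ := hcon
    -- m must be in adjoin M a and adjoin M b.
    have key : ∀ c : H, c ∉ M → m ∈ adjoin M c := by
      intro c hc
      by_contra hmc
      have : adjoin M c ⊆ M := hmax ⟨adjoin_isFilter hMfil c, hmc⟩ (subset_adjoin hMfil c)
      exact hc (this (mem_adjoin hMfil c))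
    obtain ⟨p, hp, hpa⟩ := key a ha
    obtain ⟨q, hq, hqb⟩ := key b hb
    have h1 : (p ⊓ q) ⊓ (a ⊔ b) ≤ m := by
      rw [inf_sup_left]
      apply sup_le
      · exact le_trans (inf_le_inf_right a inf_le_left) hpa
      · exact le_trans (inf_le_inf_right b inf_le_right) hqb
    have h2 : (p ⊓ q) ⊓ (a ⊔ b) ∈ M :=
      hMfil.2.2 _ _ (hMfil.2.2 _ _ hp hq) hab
    exact hmM (hMfil.2.1 _ _ h2 h1)

theorem himp_mem_of_forall_prime (P : Set H) (hP : IsPrimeFilter P) (m₁ m₂ : H)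
    (h : ∀ P' : Set H, IsPrimeFilter P' → P ⊆ P' → m₁ ∈ P' → m₂ ∈ P') :
    m₁ ⇨ m₂ ∈ P := by
  by_contra hnot
  have hPfil : IsFilter P := hP.1.1
  have hm2 : m₂ ∉ adjoin P m₁ := by
    rintro ⟨p, hp, hpm⟩
    exact hnot (hPfil.2.1 _ _ hp (le_himp_iff.mpr hpm))
  obtain ⟨M, hMprime, hsub, hm2M⟩ :=
    exists_prime_extension (adjoin_isFilter hPfil m₁) hm2
  exact hm2M (h M hMprime ((subset_adjoin hPfil m₁).trans hsub)
    ((hsub (mem_adjoin hPfil m₁))))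
end

section
/- Let U be an ultrafilter of a Heyting algebra H and m, m' ∈ H. Then m ⇨ m' ∈ U if and only if (m ∉ U or m' ∈ U), and this holds if and only if ¬m ⊔ m' ∈ U. -/
variable {H : Type*} [HeytingAlgebra H]

lemma himp_mem_of_not_mem (U : Set H) (hU : IsUltrafilter U) (m m' : H) (hm : m ∉ U) :
    m ⇨ m' ∈ U := by
  obtain ⟨⟨⟨hne, hup, hinf⟩, hprop⟩, hmax⟩ := hU
  set F : Set H := {b | ∃ u ∈ U, u ⊓ m ≤ b} with hFdef
  have hF : IsFilter F := by
    refine ⟨?_, ?_, ?_⟩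
    · obtain ⟨u, hu⟩ := hne
      exact ⟨u, u, hu, inf_le_left⟩
    · rintro a b ⟨u, hu, hle⟩ hab
      exact ⟨u, hu, hle.trans hab⟩
    · rintro a b ⟨u, hu, hle⟩ ⟨v, hv, hle'⟩
      refine ⟨u ⊓ v, hinf u v hu hv,
        le_inf (((inf_le_inf inf_le_left le_rfl)).trans hle)
          (((inf_le_inf inf_le_right le_rfl)).trans hle')⟩
  have hUF : U ⊆ F := fun u hu => ⟨u, hu, inf_le_left⟩
  by_cases h : F = Set.univ
  · have : m' ∈ F := h ▸ Set.mem_univ m'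
    obtain ⟨u, hu, hle⟩ := this
    exact hup u (m ⇨ m') hu (le_himp_iff.mpr hle)
  · exfalso
    apply hm
    have hFU := hmax F ⟨hF, h⟩ hUF
    obtain ⟨u, hu⟩ := hne
    have : m ∈ F := ⟨u, hu, inf_le_right⟩
    rwa [hFU] at this

theorem himp_mem_ultrafilter_iff (U : Set H) (hU : IsUltrafilter U) (m m' : H) :
    (m ⇨ m' ∈ U ↔ (m ∉ U ∨ m' ∈ U)) ∧ (m ⇨ m' ∈ U ↔ mᶜ ⊔ m' ∈ U) := by
  obtain ⟨⟨⟨hne, hup, hinf⟩, hprop⟩, hmax⟩ := hU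
  have h1 : m ⇨ m' ∈ U ↔ (m ∉ U ∨ m' ∈ U) := by
    constructor
    · intro h
      by_cases hm : m ∈ U
      · right
        have := hinf _ _ h hm
        exact hup _ _ this (by rw [inf_comm]; exact inf_himp_le)
      · exact Or.inl hm
    · rintro (hm | hm')
      · exact himp_mem_of_not_mem U ⟨⟨⟨hne, hup, hinf⟩, hprop⟩, hmax⟩ m m' hm
      · exact hup _ _ hm' (le_himp_iff.mpr inf_le_left)
  refine ⟨h1, ?_⟩
  constructor
  · intro h
    rcases h1.mp h with hm | hm'
    · have hc : mᶜ ∈ U := by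
        have := himp_mem_of_not_mem U ⟨⟨⟨hne, hup, hinf⟩, hprop⟩, hmax⟩ m ⊥ hm
        rwa [himp_bot] at this
      exact hup _ _ hc le_sup_left
    · exact hup _ _ hm' le_sup_right
  · intro h
    refine hup _ _ h (sup_le ?_ (le_himp_iff.mpr inf_le_left))
    exact le_himp_iff.mpr (by rw [inf_comm]; exact le_trans (by simp) bot_le)
end

section
/- Let H be a Heyting algebra and U an ultrafilter of H. Then the quotient of H by the congruence m ∼ m' ⟺ (m ⇨ m' ∈ U and m' ⇨ m ∈ U) is isomorphic to the two-element Boolean algebra, with the equivalence class of ⊤ equal to U. -/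
variable {H : Type*} [HeytingAlgebra H]

theorem ultrafilter_quotient_two_element (U : Set H) (hU : IsUltrafilter U) :
    ∃ h : HeytingHom H Bool, ∀ m : H, (h m = true ↔ m ∈ U) := by
  classical
  obtain ⟨⟨⟨⟨u0, hu0⟩, hup, hinf⟩, hproper⟩, hmax⟩ := hU
  have htop : (⊤ : H) ∈ U := hup u0 ⊤ hu0 le_top
  have hbot : (⊥ : H) ∉ U := by
    intro hb
    exact hproper (Set.eq_univ_of_forall fun x => hup ⊥ x hb bot_le)
  -- key: if a ∉ U then aᶜ ∈ U
  have hcompl : ∀ a : H, a ∉ U → aᶜ ∈ U := by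
    intro a ha
    set F : Set H := {x | ∃ u ∈ U, u ⊓ a ≤ x} with hF
    have hUF : U ⊆ F := fun u hu => ⟨u, hu, inf_le_left⟩
    have hFfilter : IsFilter F := by
      refine ⟨⟨⊤, hUF htop⟩, ?_, ?_⟩
      · rintro x y ⟨u, hu, hx⟩ hxy; exact ⟨u, hu, hx.trans hxy⟩
      · rintro x y ⟨u, hu, hx⟩ ⟨v, hv, hy⟩
        refine ⟨u ⊓ v, hinf u v hu hv, ?_⟩
        have h1 : u ⊓ v ⊓ a ≤ x := le_trans (inf_le_inf_right a inf_le_left) hx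
        have h2 : u ⊓ v ⊓ a ≤ y := le_trans (inf_le_inf_right a inf_le_right) hy
        exact le_inf h1 h2
    have haF : a ∈ F := ⟨⊤, htop, by simp⟩
    have : F ≠ Set.univ → False := by
      intro hne
      have := hmax F ⟨hFfilter, hne⟩ hUF
      exact ha (this ▸ haF)
    have hFuniv : F = Set.univ := by by_contra hne; exact this hne
    have : (⊥ : H) ∈ F := hFuniv ▸ Set.mem_univ ⊥
    obtain ⟨u, hu, hle⟩ := this
    have : u ≤ aᶜ := le_compl_iff_disjoint_right.mpr (disjoint_iff.mpr (le_bot_iff.mp hle))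
    exact hup u aᶜ hu this
  have himp_iff : ∀ a b : H, a ⇨ b ∈ U ↔ (a ∈ U → b ∈ U) := by
    intro a b
    constructor
    · intro h ha
      have : a ⊓ (a ⇨ b) ≤ b := by simp [inf_himp]
      exact hup _ _ (hinf _ _ ha h) this
    · intro h
      by_cases ha : a ∈ U
      · exact hup b _ (h ha) le_himp
      · refine hup aᶜ _ (hcompl a ha) ?_
        rw [← himp_bot]; exact himp_le_himp_left bot_le
  have hsup_iff : ∀ a b : H, a ⊔ b ∈ U ↔ (a ∈ U ∨ b ∈ U) := by
    intro a b
    constructor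
    · intro h
      by_cases ha : a ∈ U
      · exact Or.inl ha
      · right
        have hc := hcompl a ha
        have : (a ⊔ b) ⊓ aᶜ ≤ b := by
          rw [inf_sup_right]
          simp
        exact hup _ _ (hinf _ _ h hc) this
    · rintro (h | h)
      · exact hup a _ h le_sup_left
      · exact hup b _ h le_sup_right
  refine ⟨⟨⟨⟨fun m => decide (m ∈ U), ?_⟩, ?_⟩, ?_, ?_⟩, ?_⟩
  · intro a b
    simp only [hsup_iff]
    by_cases ha : a ∈ U <;> by_cases hb : b ∈ U <;> simp [ha, hb]
  · intro a b
    have : a ⊓ b ∈ U ↔ a ∈ U ∧ b ∈ U := by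
      constructor
      · intro h; exact ⟨hup _ _ h inf_le_left, hup _ _ h inf_le_right⟩
      · rintro ⟨ha, hb⟩; exact hinf _ _ ha hb
    simp only [this]
    by_cases ha : a ∈ U <;> by_cases hb : b ∈ U <;> simp [ha, hb]
  · simp [hbot]
  · intro a b
    simp only [himp_iff]
    by_cases ha : a ∈ U <;> by_cases hb : b ∈ U <;> simp [ha, hb] <;> decide
  · intro m
    show decide (m ∈ U) = true ↔ m ∈ U
    exact decide_eq_true_iff
end

section
/- If H is a nontrivial Heyting algebra with the disjunction property in which a ⊔ (a ⇨ b) ⊔ ¬b = ⊤ holds for all a, b ∈ H, then H has at most three elements. -/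
open Classical in
noncomputable def hosoiRank {H : Type*} [HeytingAlgebra H] (x : H) : ℕ :=
  if x = ⊤ then 0 else if x = ⊥ then 1 else 2

theorem hosoi_at_most_three {H : Type*} [HeytingAlgebra H]
    (hnt : (⊥ : H) ≠ ⊤)
    (hDP : ∀ m m' : H, m ⊔ m' = ⊤ → m = ⊤ ∨ m' = ⊤)
    (hosoi : ∀ a b : H, a ⊔ (a ⇨ b) ⊔ bᶜ = ⊤) :
    ∀ a b c d : H, a = b ∨ a = c ∨ a = d ∨ b = c ∨ b = d ∨ c = d := by
  have tri : ∀ a b : H, a = ⊤ ∨ a ≤ b ∨ b = ⊥ := by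
    intro a b
    rcases hDP _ _ (hosoi a b) with h | h
    · rcases hDP _ _ h with h' | h'
      · exact Or.inl h'
      · exact Or.inr (Or.inl (by rwa [himp_eq_top_iff] at h'))
    · refine Or.inr (Or.inr ?_)
      rw [← himp_bot] at h
      rw [himp_eq_top_iff, le_bot_iff] at h
      exact h
  have key : ∀ a b : H, a ≠ ⊤ → a ≠ ⊥ → b ≠ ⊤ → b ≠ ⊥ → a = b := by
    intro a b ha ha' hb hb'
    have h1 : a ≤ b := by rcases tri a b with h | h | h <;> tauto
    have h2 : b ≤ a := by rcases tri b a with h | h | h <;> tauto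
    exact le_antisymm h1 h2
  have hf : ∀ x y : H, hosoiRank x = hosoiRank y → x = y := by
    intro x y h
    unfold hosoiRank at h
    split_ifs at h <;>
      first
        | omega
        | (subst_vars; rfl)
        | exact key x y (by assumption) (by assumption) (by assumption) (by assumption)
  have hlt : ∀ x : H, hosoiRank x < 3 := by
    intro x; unfold hosoiRank; split_ifs <;> omega
  intro a b c d
  have ha := hlt a; have hb := hlt b; have hc := hlt c; have hd := hlt d
  have : hosoiRank a = hosoiRank b ∨ hosoiRank a = hosoiRank c ∨
      hosoiRank a = hosoiRank d ∨ hosoiRank b = hosoiRank c ∨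
      hosoiRank b = hosoiRank d ∨ hosoiRank c = hosoiRank d := by omega
  rcases this with h | h | h | h | h | h
  · exact Or.inl (hf _ _ h)
  · exact Or.inr (Or.inl (hf _ _ h))
  · exact Or.inr (Or.inr (Or.inl (hf _ _ h)))
  · exact Or.inr (Or.inr (Or.inr (Or.inl (hf _ _ h))))
  · exact Or.inr (Or.inr (Or.inr (Or.inr (Or.inl (hf _ _ h)))))
  · exact Or.inr (Or.inr (Or.inr (Or.inr (Or.inr (hf _ _ h)))))
end

section
/- Let H be a Heyting algebra with the disjunction property in which ¬a ⊔ ¬¬a = ⊤ holds for every a ∈ H. Then for all m, m' ∈ H, if m > ⊥ and m' > ⊥ then m ⊓ m' > ⊥. -/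
theorem jankov_KC {H : Type*} [HeytingAlgebra H]
    (hDP : ∀ m m' : H, m ⊔ m' = ⊤ → m = ⊤ ∨ m' = ⊤)
    (hjan : ∀ a : H, aᶜ ⊔ aᶜᶜ = ⊤) :
    ∀ m m' : H, ⊥ < m → ⊥ < m' → ⊥ < m ⊓ m' := by
  have key : ∀ a : H, ⊥ < a → aᶜᶜ = ⊤ := by
    intro a ha
    rcases hDP _ _ (hjan a) with h | h
    · exfalso
      have : a ≤ ⊥ := by
        have := le_compl_iff_disjoint_left.mp h.ge
        simpa [disjoint_top] using this
      exact absurd (le_antisymm this bot_le) (ne_of_gt ha)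
    · exact h
  intro m m' hm hm'
  rcases eq_bot_or_bot_lt (m ⊓ m') with h | h
  · exfalso
    have h1 : m ≤ m'ᶜ := le_compl_iff_disjoint_right.mpr (disjoint_iff.mpr h)
    have h2 : m'ᶜᶜ ≤ mᶜ := compl_le_compl h1
    have h3 : mᶜ = ⊤ := top_le_iff.mp (key m' hm' ▸ h2)
    have : m ≤ ⊥ := by
      have := le_compl_iff_disjoint_left.mp h3.ge
      simpa [disjoint_top] using this
    exact absurd (le_antisymm this bot_le) (ne_of_gt hm)
  · exact h
end

section
/- Let H be a Heyting algebra such that for all m, m' ∈ H, m > ⊥ and m' > ⊥ imply m ⊓ m' > ⊥. Then ¬a ⊔ ¬¬a = ⊤ holds for every a ∈ H. -/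
theorem KC_jankov {H : Type*} [HeytingAlgebra H]
    (hKC : ∀ m m' : H, ⊥ < m → ⊥ < m' → ⊥ < m ⊓ m') :
    ∀ a : H, aᶜ ⊔ aᶜᶜ = ⊤ := by
  intro a
  by_cases h : a = ⊥
  · simp [h]
  · have ha : ⊥ < a := bot_lt_iff_ne_bot.mpr h
    have hc : aᶜ = ⊥ := by
      by_contra hc
      have := hKC a aᶜ ha (bot_lt_iff_ne_bot.mpr hc)
      simp at this
    simp [hc]
end
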